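/- arXiv:1306.4080 — 3 statements merged into one kernel-verified Lean document; each statement's English description precedes it below -/
import Mathlib

section
/- Let λ_1 ≤ λ_2 ≤ ... ≤ λ_n be nonnegative reals and for 1 ≤ P ≤ n define f(P) = (1/C(n,P)) Σ_{k=P}^{n} λ_k C(k-1, P-1). Then g(P) = f(P)/P is monotonically decreasing in P, i.e., f(P+1)/(P+1) ≤ f(P)/P for all 1 ≤ P ≤ n-1. -/
/-! Writing `S P = ∑_{k=P}^n λ_k C(k-1, P-1)`, so that `f P = S P / C(n, P)`, the claim
reduces via `(P+1) C(n, P+1) = (n-P) C(n, P)` to `P · S (P+1) ≤ (n-P) · S P`. This holds term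
by term, since `P · C(k-1, P) = (k-P) · C(k-1, P-1) ≤ (n-P) · C(k-1, P-1)` for `k ≤ n`. -/

open Finset

theorem Nat.succ_mul_choose_succ_le {m N : ℕ} (p : ℕ) (h : m ≤ N) :
    (p + 1) * m.choose (p + 1) ≤ (N - p) * m.choose p := by
  rw [mul_comm, Nat.choose_succ_right_eq, mul_comm]
  exact Nat.mul_le_mul_right _ (by omega)

theorem succ_mul_sum_choose_le (n p : ℕ) {lam : ℕ → ℝ} (hlam : ∀ k, 0 ≤ lam k) :
    (p + 1 : ℝ) * ∑ k ∈ Icc (p + 1 + 1) n, lam k * ((k - 1).choose (p + 1) : ℝ) ≤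
      ((n - (p + 1) : ℕ) : ℝ) * ∑ k ∈ Icc (p + 1) n, lam k * ((k - 1).choose p : ℝ) := by
  rw [mul_sum, mul_sum]
  calc _ ≤ ∑ k ∈ Icc (p + 1 + 1) n,
          ((n - (p + 1) : ℕ) : ℝ) * (lam k * ((k - 1).choose p : ℝ)) := by
        refine sum_le_sum fun k hk ↦ ?_
        have hterm := Nat.succ_mul_choose_succ_le p (Nat.sub_le_sub_right (mem_Icc.1 hk).2 1)
        rw [Nat.sub_sub, add_comm 1 p] at hterm
        rw [mul_left_comm, mul_left_comm (_ : ℝ) (lam k)]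
        exact mul_le_mul_of_nonneg_left (by exact_mod_cast hterm) (hlam k)
    _ ≤ _ := sum_le_sum_of_subset_of_nonneg (Icc_subset_Icc_left (by omega))
        fun k _ _ ↦ mul_nonneg (Nat.cast_nonneg _) (mul_nonneg (hlam k) (Nat.cast_nonneg _))

theorem expected_max_over_P_decreasing_general (n : ℕ) (lam : ℕ → ℝ)
    (hnonneg : ∀ i, 0 ≤ lam i)
    (f : ℕ → ℝ)
    (hf : ∀ P, f P = (1 / (n.choose P : ℝ)) *
      ∑ k ∈ Finset.Icc P n, lam k * ((k - 1).choose (P - 1) : ℝ))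
    (P : ℕ) (hP1 : 1 ≤ P) (hPn : P ≤ n - 1) :
    f (P + 1) / (P + 1 : ℝ) ≤ f P / (P : ℝ) := by
  obtain ⟨p, rfl⟩ := Nat.exists_eq_add_of_le' hP1
  have hsum := succ_mul_sum_choose_le n p hnonneg
  have hchoose : ((p + 1 + 1 : ℕ) : ℝ) * n.choose (p + 1 + 1) =
      ((n - (p + 1) : ℕ) : ℝ) * n.choose (p + 1) := by
    exact_mod_cast (mul_comm _ _).trans ((Nat.choose_succ_right_eq n (p + 1)).trans (mul_comm _ _))
  have hC : (0 : ℝ) < n.choose (p + 1) := by exact_mod_cast Nat.choose_pos (by omega)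
  have hN : (0 : ℝ) < (n - (p + 1) : ℕ) := by exact_mod_cast Nat.sub_pos_of_lt (by omega)
  simp only [hf, Nat.add_sub_cancel]
  push_cast at hchoose hsum ⊢
  rw [one_div_mul_eq_div, one_div_mul_eq_div, div_div, div_div, mul_comm, hchoose,
    div_le_div_iff₀ (by positivity) (by positivity)]
  linear_combination (n.choose (p + 1) : ℝ) * hsum

/-- for nondecreasing nonnegative `λ`,
`f P / P` is monotonically decreasing in `P`, where
`f P = (1/C(n,P)) Σ_{k=P}^n λ_k C(k-1,P-1)`. -/
theorem expected_max_over_P_decreasing (n : ℕ) (lam : ℕ → ℝ)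
    (hmono : ∀ i j, i ≤ j → lam i ≤ lam j) (hnonneg : ∀ i, 0 ≤ lam i)
    (f : ℕ → ℝ)
    (hf : ∀ P, f P = (1 / (n.choose P : ℝ)) *
      ∑ k ∈ Finset.Icc P n, lam k * ((k - 1).choose (P - 1) : ℝ))
    (P : ℕ) (hP1 : 1 ≤ P) (hPn : P ≤ n - 1) :
    f (P + 1) / (P + 1 : ℝ) ≤ f P / (P : ℝ) :=
  expected_max_over_P_decreasing_general n lam hnonneg f hf P hP1 hPn
end

section
/- Let L: ℝⁿ → ℝ be convex and differentiable, let H be a positive semidefinite n×n matrix, let w ∈ ℝⁿ, and suppose d ∈ ℝⁿ minimizes the function d ↦ ∇L(w)ᵀd + (1/2)dᵀHd + ‖w+d‖₁. Then ∇L(w)ᵀd + ‖w+d‖₁ − ‖w‖₁ ≤ −dᵀHd. -/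
open RealInnerProductSpace

/-- if `d` minimizes `d ↦ ∇L(w)ᵀd + (1/2)dᵀHd + ‖w+d‖₁` for a
convex differentiable `L` and positive semidefinite `H`, then
`∇L(w)ᵀd + ‖w+d‖₁ − ‖w‖₁ ≤ −dᵀHd`. -/
theorem descent_direction_inequality (n : ℕ)
    (L : EuclideanSpace ℝ (Fin n) → ℝ)
    (hconv : ConvexOn ℝ Set.univ L) (hdiff : Differentiable ℝ L)
    (w g d : EuclideanSpace ℝ (Fin n)) (hg : HasGradientAt L g w)
    (H : EuclideanSpace ℝ (Fin n) →L[ℝ] EuclideanSpace ℝ (Fin n))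
    (hHsymm : ∀ u v, ⟪H u, v⟫ = ⟪u, H v⟫)
    (hHpsd : ∀ v, 0 ≤ ⟪v, H v⟫)
    (hmin : ∀ d' : EuclideanSpace ℝ (Fin n),
      ⟪g, d⟫ + (1 / 2) * ⟪d, H d⟫ + ∑ j, |w j + d j| ≤
      ⟪g, d'⟫ + (1 / 2) * ⟪d', H d'⟫ + ∑ j, |w j + d' j|) :
    ⟪g, d⟫ + (∑ j, |w j + d j|) - (∑ j, |w j|) ≤ -⟪d, H d⟫ := by
  set Q : ℝ := ⟪d, H d⟫ with hQdef
  set X : ℝ := ⟪g, d⟫ + (∑ j, |w j + d j|) - (∑ j, |w j|) with hXdef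
  have key : ∀ α : ℝ, 0 ≤ α → α < 1 → X ≤ -((1 + α) / 2) * Q := by
    intro α h0 h1
    have hmin' := hmin (α • d)
    have h1' : ⟪g, α • d⟫ = α * ⟪g, d⟫ := real_inner_smul_right g d α
    have h2' : ⟪α • d, H (α • d)⟫ = α ^ 2 * Q := by
      rw [map_smul, real_inner_smul_left, real_inner_smul_right, hQdef]; ring
    have h3' : ∑ j, |w j + (α • d) j| ≤
        α * (∑ j, |w j + d j|) + (1 - α) * (∑ j, |w j|) := by
      rw [Finset.mul_sum, Finset.mul_sum, ← Finset.sum_add_distrib]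
      apply Finset.sum_le_sum
      intro j _
      have hj : w j + (α • d) j = α * (w j + d j) + (1 - α) * (w j) := by
        simp [smul_eq_mul]; ring
      rw [hj]
      have habs := abs_add_le (α * (w j + d j)) ((1 - α) * w j)
      rw [abs_mul, abs_mul, abs_of_nonneg h0,
        abs_of_nonneg (show (0:ℝ) ≤ 1 - α by linarith)] at habs
      linarith
    rw [h1', h2'] at hmin'
    have hpos : 0 < 1 - α := by linarith
    nlinarith [hmin', h3']
  have hQ0 : 0 ≤ Q := hHpsd d
  have : X ≤ -Q := by
    apply le_of_forall_pos_le_add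
    intro ε hε
    rcases eq_or_lt_of_le hQ0 with hQeq | hQpos
    · have hk0 := key 0 le_rfl (by norm_num)
      rw [← hQeq] at hk0 ⊢
      linarith
    · set m : ℝ := min (ε / Q) (1 / 2) with hm
      have hm0 : 0 < m := lt_min (div_pos hε hQpos) (by norm_num)
      have hm2 : m ≤ 1 / 2 := min_le_right _ _
      have hmQ : m * Q ≤ ε := by
        have : m ≤ ε / Q := min_le_left _ _
        calc m * Q ≤ (ε / Q) * Q := by nlinarith
          _ = ε := by field_simp
      have hk := key (1 - m) (by linarith) (by linarith)
      have : -((1 + (1 - m)) / 2) * Q = -Q + (m / 2) * Q := by ring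
      rw [this] at hk
      nlinarith
  exact this
end

section
/- Let L: ℝⁿ → ℝ be convex and differentiable, H positive semidefinite, w ∈ ℝⁿ, d a minimizer of d ↦ ∇L(w)ᵀd + (1/2)dᵀHd + ‖w+d‖₁, and γ ∈ [0,1). Define Δ = ∇L(w)ᵀd + γ dᵀHd + ‖w+d‖₁ − ‖w‖₁. Then Δ ≤ (γ−1) dᵀHd ≤ 0. -/
open RealInnerProductSpace Filter Set Topology

/-! Comparing the minimizer `d` with the shorter step `t • d`, `t ∈ (0, 1)`, and using convexity of
the `ℓ¹` term along the segment from `w` to `w + d`, gives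
`(1 - t) (⟪g, d⟫ + ‖w + d‖₁ - ‖w‖₁ + ⟪d, H d⟫) ≤ (1 - t)² ⟪d, H d⟫ / 2`.
Dividing by `1 - t` and letting `t → 1` yields the descent inequality
`⟪g, d⟫ + ‖w + d‖₁ - ‖w‖₁ ≤ -⟪d, H d⟫`, from which the bound on `Δ` is linear arithmetic. -/

lemma nonpos_of_forall_le_mul {x c : ℝ} (h : ∀ s ∈ Ioo (0 : ℝ) 1, x ≤ s * c) : x ≤ 0 := by
  have hlim : Tendsto (fun s : ℝ => s * c) (𝓝[>] 0) (𝓝 0) :=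
    ((continuous_mul_const c).tendsto' 0 0 (zero_mul c)).mono_left nhdsWithin_le_nhds
  exact ge_of_tendsto hlim (eventually_of_mem (Ioo_mem_nhdsGT one_pos) h)

lemma convexOn_sum_abs (ι : Type*) [Fintype ι] :
    ConvexOn ℝ univ (fun x : EuclideanSpace ℝ ι => ∑ j, |x j|) := by
  refine ⟨convex_univ, fun x _ y _ a b ha hb _ => ?_⟩
  simp only [smul_eq_mul, Finset.mul_sum, ← Finset.sum_add_distrib]
  refine Finset.sum_le_sum fun j _ => ?_
  calc |(a • x + b • y) j| = |a * x j + b * y j| := by simp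
    _ ≤ a * |x j| + b * |y j| := by
      simpa only [abs_mul, abs_of_nonneg ha, abs_of_nonneg hb] using abs_add_le (a * x j) (b * y j)

section Descent

variable {E : Type*} [NormedAddCommGroup E] [InnerProductSpace ℝ E]

lemma inner_add_sub_le_neg_of_isMinimizer (H : E →L[ℝ] E) {ψ : E → ℝ}
    (hψ : ConvexOn ℝ univ ψ) {w g d : E}
    (hmin : ∀ d', ⟪g, d⟫ + (1 / 2) * ⟪d, H d⟫ + ψ (w + d) ≤
      ⟪g, d'⟫ + (1 / 2) * ⟪d', H d'⟫ + ψ (w + d')) :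
    ⟪g, d⟫ + ψ (w + d) - ψ w ≤ -⟪d, H d⟫ := by
  set Q := ⟪d, H d⟫
  suffices ⟪g, d⟫ + ψ (w + d) - ψ w + Q ≤ 0 by linarith
  refine nonpos_of_forall_le_mul (c := Q / 2) fun s ⟨hs0, hs1⟩ => ?_
  set t := 1 - s
  have hcompare := hmin (t • d)
  have hinner : ⟪g, t • d⟫ = t * ⟪g, d⟫ := real_inner_smul_right g d t
  have hquad : ⟪t • d, H (t • d)⟫ = t * t * Q := by
    rw [map_smul, real_inner_smul_left, real_inner_smul_right]; ring
  have hconvex : ψ (w + t • d) ≤ t * ψ (w + d) + s * ψ w := by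
    have hseg : t • (w + d) + s • w = w + t • d := by module
    simpa only [hseg, smul_eq_mul] using
      hψ.2 (mem_univ (w + d)) (mem_univ w) (by linarith) hs0.le (by ring : t + s = 1)
  rw [hinner, hquad] at hcompare
  have hscaled : s * (⟪g, d⟫ + ψ (w + d) - ψ w + Q) ≤ s * (s * (Q / 2)) := by nlinarith
  exact le_of_mul_le_mul_left hscaled hs0

end Descent

theorem armijo_delta_upper_bound_general (n : ℕ)
    (L : EuclideanSpace ℝ (Fin n) → ℝ)
    (w g d : EuclideanSpace ℝ (Fin n))
    (H : EuclideanSpace ℝ (Fin n) →L[ℝ] EuclideanSpace ℝ (Fin n))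
    (hHpsd : ∀ v, 0 ≤ ⟪v, H v⟫)
    (hmin : ∀ d' : EuclideanSpace ℝ (Fin n),
      ⟪g, d⟫ + (1 / 2) * ⟪d, H d⟫ + ∑ j, |w j + d j| ≤
      ⟪g, d'⟫ + (1 / 2) * ⟪d', H d'⟫ + ∑ j, |w j + d' j|)
    (γ : ℝ) (hγ1 : γ < 1)
    (Δ : ℝ)
    (hΔ : Δ = ⟪g, d⟫ + γ * ⟪d, H d⟫ + (∑ j, |w j + d j|) - ∑ j, |w j|) :
    Δ ≤ (γ - 1) * ⟪d, H d⟫ ∧ (γ - 1) * ⟪d, H d⟫ ≤ 0 := by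
  have hdescent := inner_add_sub_le_neg_of_isMinimizer H (convexOn_sum_abs (Fin n)) (w := w)
    (fun d' => by simpa only [PiLp.add_apply] using hmin d')
  simp only [PiLp.add_apply] at hdescent
  exact ⟨by linarith, mul_nonpos_of_nonpos_of_nonneg (by linarith) (hHpsd d)⟩

/-- with `d` minimizing `d ↦ ∇L(w)ᵀd + (1/2)dᵀHd + ‖w+d‖₁`,
`γ ∈ [0,1)` and `Δ = ∇L(w)ᵀd + γ dᵀHd + ‖w+d‖₁ − ‖w‖₁`, one has
`Δ ≤ (γ−1) dᵀHd ≤ 0`. -/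
theorem armijo_delta_upper_bound (n : ℕ)
    (L : EuclideanSpace ℝ (Fin n) → ℝ)
    (hconv : ConvexOn ℝ Set.univ L) (hdiff : Differentiable ℝ L)
    (w g d : EuclideanSpace ℝ (Fin n)) (hg : HasGradientAt L g w)
    (H : EuclideanSpace ℝ (Fin n) →L[ℝ] EuclideanSpace ℝ (Fin n))
    (hHsymm : ∀ u v, ⟪H u, v⟫ = ⟪u, H v⟫)
    (hHpsd : ∀ v, 0 ≤ ⟪v, H v⟫)
    (hmin : ∀ d' : EuclideanSpace ℝ (Fin n),
      ⟪g, d⟫ + (1 / 2) * ⟪d, H d⟫ + ∑ j, |w j + d j| ≤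
      ⟪g, d'⟫ + (1 / 2) * ⟪d', H d'⟫ + ∑ j, |w j + d' j|)
    (γ : ℝ) (hγ0 : 0 ≤ γ) (hγ1 : γ < 1)
    (Δ : ℝ)
    (hΔ : Δ = ⟪g, d⟫ + γ * ⟪d, H d⟫ + (∑ j, |w j + d j|) - ∑ j, |w j|) :
    Δ ≤ (γ - 1) * ⟪d, H d⟫ ∧ (γ - 1) * ⟪d, H d⟫ ≤ 0 :=
  armijo_delta_upper_bound_general n L w g d H hHpsd hmin γ hγ1 Δ hΔ
end
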